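/- Consider the planar vector field f : ℝ² → ℝ² given by f(x₁,x₂) = (x₁(−(α₁+d₂)x₁² − (α₁+α₂+d₁+d₂)x₂² + (α₁+d₂)), x₂((α₂+α₃+d₁+d₃)x₁² + (α₃+d₃)x₂² − (α₃+d₃))) (the restriction of the Kolmogorov system to the invariant sphere octant S²₊). Define, on the region U = {(x₁,x₂) : x₁ > 0, x₂ > 0, x₁² + x₂² < 1}, the function H(x₁,x₂) = x₁^{2(α₃+d₃)} · x₂^{2(α₁+d₂)} · (1 − x₁² − x₂²)^{α₂+d₁} (real powers). Then H is a first integral of f on U: for every differentiable y : ℝ → ℝ² with y'(t) = f(y(t)) and y(t) ∈ U for all t, the function t ↦ H(y(t)) is constant. -/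

import Mathlib

/-- The restriction of the Kolmogorov system to the invariant sphere octant `S²₊`,
viewed as a planar vector field. -/
noncomputable def fRed (α₁ α₂ α₃ d₁ d₂ d₃ : ℝ) (p : ℝ × ℝ) : ℝ × ℝ :=
  (p.1 * (-(α₁ + d₂) * p.1 ^ 2 - (α₁ + α₂ + d₁ + d₂) * p.2 ^ 2 + (α₁ + d₂)),
   p.2 * ((α₂ + α₃ + d₁ + d₃) * p.1 ^ 2 + (α₃ + d₃) * p.2 ^ 2 - (α₃ + d₃)))

/-- `H(x₁,x₂) = x₁^{2(α₃+d₃)} · x₂^{2(α₁+d₂)} · (1 − x₁² − x₂²)^{α₂+d₁}` (real powers). -/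
noncomputable def Hfun (α₁ α₂ α₃ d₁ d₂ d₃ : ℝ) (p : ℝ × ℝ) : ℝ :=
  p.1 ^ (2 * (α₃ + d₃)) * p.2 ^ (2 * (α₁ + d₂)) * (1 - p.1 ^ 2 - p.2 ^ 2) ^ (α₂ + d₁)

/-! Along a solution in `U`, `d/dt log H` is the combination
`2(α₃+d₃)·ẋ₁/x₁ + 2(α₁+d₂)·ẋ₂/x₂ + (α₂+d₁)·(d/dt)(1 − x₁² − x₂²)/(1 − x₁² − x₂²)`
of the logarithmic derivatives of the three factors. Since `ẋ₁/x₁` and `ẋ₂/x₂` are quadratic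
polynomials, clearing the last denominator makes this an identity between polynomials, so
`H` has zero derivative along the solution. -/

section Prod

variable {𝕜 E F : Type*} [NontriviallyNormedField 𝕜] [NormedAddCommGroup E] [NormedSpace 𝕜 E]
  [NormedAddCommGroup F] [NormedSpace 𝕜 F] {f : 𝕜 → E × F} {f' : E × F} {t : 𝕜}

theorem HasDerivAt.prod_fst (hf : HasDerivAt f f' t) :
    HasDerivAt (fun s => (f s).1) f'.1 t := by
  simpa using hf.hasFDerivAt.fst.hasDerivAt

theorem HasDerivAt.prod_snd (hf : HasDerivAt f f' t) :
    HasDerivAt (fun s => (f s).2) f'.2 t := by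
  simpa using hf.hasFDerivAt.snd.hasDerivAt

end Prod

theorem HasDerivAt.rpow_mul_rpow_mul_rpow {u v w : ℝ → ℝ} {u' v' w' a b c t : ℝ}
    (hu : HasDerivAt u u' t) (hv : HasDerivAt v v' t) (hw : HasDerivAt w w' t)
    (hu₀ : 0 < u t) (hv₀ : 0 < v t) (hw₀ : 0 < w t) :
    HasDerivAt (fun s => u s ^ a * v s ^ b * w s ^ c)
      (u t ^ a * v t ^ b * w t ^ c * (a * u' / u t + b * v' / v t + c * w' / w t)) t := by
  refine (((hu.rpow_const (p := a) (Or.inl hu₀.ne')).mul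
    (hv.rpow_const (p := b) (Or.inl hv₀.ne'))).mul
      (hw.rpow_const (p := c) (Or.inl hw₀.ne'))).congr_deriv ?_
  rw [Real.rpow_sub_one hu₀.ne', Real.rpow_sub_one hv₀.ne', Real.rpow_sub_one hw₀.ne']
  simp only [Pi.mul_apply]
  field_simp

theorem hasDerivAt_Hfun_comp (α₁ α₂ α₃ d₁ d₂ d₃ : ℝ) {y : ℝ → ℝ × ℝ} {y' : ℝ × ℝ} {t : ℝ}
    (hy : HasDerivAt y y' t) (h₁ : 0 < (y t).1) (h₂ : 0 < (y t).2)
    (h₃ : (y t).1 ^ 2 + (y t).2 ^ 2 < 1) :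
    HasDerivAt (fun s => Hfun α₁ α₂ α₃ d₁ d₂ d₃ (y s))
      (Hfun α₁ α₂ α₃ d₁ d₂ d₃ (y t) *
        (2 * (α₃ + d₃) * y'.1 / (y t).1 + 2 * (α₁ + d₂) * y'.2 / (y t).2
          - (α₂ + d₁) * (2 * (y t).1 * y'.1 + 2 * (y t).2 * y'.2)
            / (1 - (y t).1 ^ 2 - (y t).2 ^ 2))) t := by
  have hw : HasDerivAt (fun s => 1 - (y s).1 ^ 2 - (y s).2 ^ 2)
      (-(2 * (y t).1 * y'.1 + 2 * (y t).2 * y'.2)) t := by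
    refine (((hasDerivAt_const t (1 : ℝ)).sub (hy.prod_fst.pow 2)).sub
      (hy.prod_snd.pow 2)).congr_deriv ?_
    norm_num
    ring
  exact (hy.prod_fst.rpow_mul_rpow_mul_rpow (a := 2 * (α₃ + d₃)) (b := 2 * (α₁ + d₂))
    (c := α₂ + d₁) hy.prod_snd hw h₁ h₂ (by linarith)).congr_deriv (by unfold Hfun; ring)

theorem fRed_logDeriv_Hfun_eq_zero (α₁ α₂ α₃ d₁ d₂ d₃ : ℝ) {p : ℝ × ℝ}
    (h₁ : p.1 ≠ 0) (h₂ : p.2 ≠ 0) (h₃ : 1 - p.1 ^ 2 - p.2 ^ 2 ≠ 0) :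
    2 * (α₃ + d₃) * (fRed α₁ α₂ α₃ d₁ d₂ d₃ p).1 / p.1
      + 2 * (α₁ + d₂) * (fRed α₁ α₂ α₃ d₁ d₂ d₃ p).2 / p.2
      - (α₂ + d₁) * (2 * p.1 * (fRed α₁ α₂ α₃ d₁ d₂ d₃ p).1
          + 2 * p.2 * (fRed α₁ α₂ α₃ d₁ d₂ d₃ p).2) / (1 - p.1 ^ 2 - p.2 ^ 2) = 0 := by
  simp only [fRed]
  field_simp
  ring

/-- `H` is a first integral of the reduced planar system on
`U = {(x₁,x₂) : x₁ > 0, x₂ > 0, x₁² + x₂² < 1}`: it is constant along every solution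
staying in `U`. -/
theorem Hfun_first_integral (α₁ α₂ α₃ d₁ d₂ d₃ : ℝ) (y : ℝ → ℝ × ℝ)
    (hy : ∀ t : ℝ, HasDerivAt y (fRed α₁ α₂ α₃ d₁ d₂ d₃ (y t)) t)
    (hU : ∀ t : ℝ, 0 < (y t).1 ∧ 0 < (y t).2 ∧ (y t).1 ^ 2 + (y t).2 ^ 2 < 1) :
    ∀ s t : ℝ, Hfun α₁ α₂ α₃ d₁ d₂ d₃ (y s) = Hfun α₁ α₂ α₃ d₁ d₂ d₃ (y t) := by
  have hH : ∀ t, HasDerivAt (fun s => Hfun α₁ α₂ α₃ d₁ d₂ d₃ (y s)) 0 t := by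
    intro t
    obtain ⟨h₁, h₂, h₃⟩ := hU t
    convert hasDerivAt_Hfun_comp α₁ α₂ α₃ d₁ d₂ d₃ (hy t) h₁ h₂ h₃ using 1
    rw [fRed_logDeriv_Hfun_eq_zero α₁ α₂ α₃ d₁ d₂ d₃ h₁.ne' h₂.ne' (by linarith), mul_zero]
  exact is_const_of_deriv_eq_zero (fun t => (hH t).differentiableAt) (fun t => (hH t).deriv)
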